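/- arXiv:2105.03506 — 3 statements merged into one kernel-verified Lean document; each statement's English description precedes it below -/
import Mathlib

section
/- Define φ_sph(t)=q̄·(c+t)/(c+ξ'(q̄)) for t∈[0,ξ'(q̄)] and ψ_sph=ξ'∘φ_sph. Let b₀=0 and b_{k+1}=ψ_sph(b_k) for k≥0. Then the sequence (b_k) is increasing and converges to ξ'(q̄), and consequently φ_sph(b_k) converges to q̄ as k→∞. -/
open Set Filter MeasureTheory

/-- A mean-field spin glass mixture function `ξ(z) = ∑_{p≥2} c_p² z^p`:
nonnegative, exponentially decaying coefficients (indexed so that `coeff p = c_p²`),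
vanishing in degrees 0 and 1, and not identically zero. -/
structure MixtureFunction where
  coeff : ℕ → ℝ
  coeff_nonneg : ∀ p, 0 ≤ coeff p
  coeff_zero : coeff 0 = 0
  coeff_one : coeff 1 = 0
  coeff_decay : ∃ C r : ℝ, 0 < C ∧ 0 < r ∧ r < 1 ∧ ∀ p, coeff p ≤ C * r ^ p
  nontrivial : ∃ p, coeff p ≠ 0

/-- The mixture function `ξ(z) = ∑_p c_p² z^p`. -/
noncomputable def MixtureFunction.xi (ξ : MixtureFunction) (z : ℝ) : ℝ :=
  ∑' p : ℕ, ξ.coeff p * z ^ p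

/-- The first derivative `ξ'(z) = ∑_p p c_p² z^(p-1)`. -/
noncomputable def MixtureFunction.xi1 (ξ : MixtureFunction) (z : ℝ) : ℝ :=
  ∑' p : ℕ, (p : ℝ) * ξ.coeff p * z ^ (p - 1)

/-- The second derivative `ξ''(z) = ∑_p p(p-1) c_p² z^(p-2)`. -/
noncomputable def MixtureFunction.xi2 (ξ : MixtureFunction) (z : ℝ) : ℝ :=
  ∑' p : ℕ, (p : ℝ) * ((p : ℝ) - 1) * ξ.coeff p * z ^ (p - 2)

/-- The third derivative `ξ'''(z) = ∑_p p(p-1)(p-2) c_p² z^(p-3)`. -/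
noncomputable def MixtureFunction.xi3 (ξ : MixtureFunction) (z : ℝ) : ℝ :=
  ∑' p : ℕ, (p : ℝ) * ((p : ℝ) - 1) * ((p : ℝ) - 2) * ξ.coeff p * z ^ (p - 3)



namespace MixtureFunction

variable (ξ : MixtureFunction)

lemma aux_summable_geom (C : ℝ) {r : ℝ} (hr0 : 0 < r) (hr1 : r < 1) (k : ℕ) :
    Summable (fun p : ℕ => C * ((p:ℝ)^k * r ^ p)) := by
  exact (summable_pow_mul_geometric_of_norm_lt_one k
    (by rwa [Real.norm_eq_abs, abs_of_pos hr0])).mul_left C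

lemma pqfac_nonneg (p : ℕ) : 0 ≤ (p:ℝ) * ((p:ℝ) - 1) := by
  rcases Nat.eq_zero_or_pos p with h | h
  · simp [h]
  · have : (1:ℝ) ≤ p := by exact_mod_cast h
    nlinarith [Nat.cast_nonneg (α := ℝ) p]

lemma summable_xi1_terms {z : ℝ} (h0 : 0 ≤ z) (h1 : z ≤ 1) :
    Summable (fun p : ℕ => (p:ℝ) * ξ.coeff p * z ^ (p - 1)) := by
  obtain ⟨C, r, hC, hr0, hr1, hd⟩ := ξ.coeff_decay
  refine Summable.of_nonneg_of_le (fun p => mul_nonneg (mul_nonneg (Nat.cast_nonneg p) (ξ.coeff_nonneg p)) (pow_nonneg h0 _)) (fun p => ?_)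
    (aux_summable_geom C hr0 hr1 1)
  have hz : z ^ (p-1) ≤ 1 := pow_le_one₀ h0 h1
  have hcp := ξ.coeff_nonneg p
  have hdp := hd p
  have hp0 : (0:ℝ) ≤ p := Nat.cast_nonneg p
  have hzp : 0 ≤ z ^ (p-1) := by positivity
  calc (p:ℝ) * ξ.coeff p * z ^ (p-1) ≤ (p:ℝ) * ξ.coeff p * 1 := by
        apply mul_le_mul_of_nonneg_left hz (by positivity)
    _ = (p:ℝ) * ξ.coeff p := mul_one _
    _ ≤ (p:ℝ) * (C * r ^ p) := mul_le_mul_of_nonneg_left hdp hp0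
    _ = C * ((p:ℝ)^1 * r ^ p) := by ring

lemma summable_xi2_terms {z : ℝ} (h0 : 0 ≤ z) (h1 : z ≤ 1) :
    Summable (fun p : ℕ => (p:ℝ) * ((p:ℝ) - 1) * ξ.coeff p * z ^ (p - 2)) := by
  obtain ⟨C, r, hC, hr0, hr1, hd⟩ := ξ.coeff_decay
  refine Summable.of_nonneg_of_le
    (fun p => mul_nonneg (mul_nonneg (pqfac_nonneg p) (ξ.coeff_nonneg p)) (by positivity))
    (fun p => ?_) (aux_summable_geom C hr0 hr1 2)
  have hz : z ^ (p-2) ≤ 1 := pow_le_one₀ h0 h1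
  have hcp := ξ.coeff_nonneg p
  have hdp := hd p
  have hp0 : (0:ℝ) ≤ p := Nat.cast_nonneg p
  have hq := pqfac_nonneg p
  calc (p:ℝ) * ((p:ℝ)-1) * ξ.coeff p * z ^ (p-2)
      ≤ (p:ℝ) * ((p:ℝ)-1) * ξ.coeff p * 1 :=
        mul_le_mul_of_nonneg_left hz (mul_nonneg hq hcp)
    _ = (p:ℝ) * ((p:ℝ)-1) * ξ.coeff p := mul_one _
    _ ≤ (p:ℝ)^2 * ξ.coeff p := by nlinarith
    _ ≤ (p:ℝ)^2 * (C * r ^ p) := mul_le_mul_of_nonneg_left hdp (by positivity)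
    _ = C * ((p:ℝ)^2 * r ^ p) := by ring

lemma xi1_nonneg {z : ℝ} (h0 : 0 ≤ z) : 0 ≤ ξ.xi1 z :=
  tsum_nonneg fun p => by have := ξ.coeff_nonneg p; positivity

lemma xi1_zero : ξ.xi1 0 = 0 := by
  rw [MixtureFunction.xi1]
  convert tsum_zero with p
  match p with
  | 0 => simp
  | 1 => simp [ξ.coeff_one]
  | (n+2) => simp [zero_pow (n := n + 2 - 1) (by omega)]

lemma xi1_mono {z₁ z₂ : ℝ} (h0 : 0 ≤ z₁) (h12 : z₁ ≤ z₂) (h1 : z₂ ≤ 1) :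
    ξ.xi1 z₁ ≤ ξ.xi1 z₂ := by
  refine Summable.tsum_le_tsum (fun p => ?_) (ξ.summable_xi1_terms h0 (h12.trans h1))
    (ξ.summable_xi1_terms (h0.trans h12) h1)
  exact mul_le_mul_of_nonneg_left (pow_le_pow_left₀ h0 h12 _)
    (mul_nonneg (Nat.cast_nonneg p) (ξ.coeff_nonneg p))

lemma xi1_strict_mono {p0 : ℕ} (hp3 : 3 ≤ p0) (hcp : 0 < ξ.coeff p0)
    {z₁ z₂ : ℝ} (h0 : 0 ≤ z₁) (h12 : z₁ < z₂) (h1 : z₂ ≤ 1) :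
    ξ.xi1 z₁ < ξ.xi1 z₂ := by
  refine Summable.tsum_lt_tsum (i := p0) (fun p => ?_) ?_
    (ξ.summable_xi1_terms h0 (h12.le.trans h1)) (ξ.summable_xi1_terms (h0.trans h12.le) h1)
  · exact mul_le_mul_of_nonneg_left (pow_le_pow_left₀ h0 h12.le _)
      (mul_nonneg (Nat.cast_nonneg p) (ξ.coeff_nonneg p))
  · have hppos : (0:ℝ) < (p0:ℝ) * ξ.coeff p0 :=
      mul_pos (by exact_mod_cast Nat.lt_of_lt_of_le (by norm_num) hp3) hcp
    exact mul_lt_mul_of_pos_left (pow_lt_pow_left₀ h12 h0 (by omega)) hppos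

lemma exists_big (c : ℝ) (hc : 0 < c) (hlt : c + ξ.xi1 1 < ξ.xi2 1) :
    ∃ p, 3 ≤ p ∧ 0 < ξ.coeff p := by
  by_contra h
  push_neg at h
  have hz : ∀ p, 3 ≤ p → ξ.coeff p = 0 := fun p hp =>
    le_antisymm (h p hp) (ξ.coeff_nonneg p)
  have h1 : ξ.xi1 1 = 2 * ξ.coeff 2 := by
    rw [MixtureFunction.xi1, tsum_eq_single 2]
    · norm_num
    · intro p hp
      match p with
      | 0 => simp
      | 1 => simp [ξ.coeff_one]
      | 2 => exact absurd rfl hp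
      | (n+3) => simp [hz (n+3) (by omega)]
  have h2 : ξ.xi2 1 = 2 * ξ.coeff 2 := by
    rw [MixtureFunction.xi2, tsum_eq_single 2]
    · norm_num
    · intro p hp
      match p with
      | 0 => simp
      | 1 => simp [ξ.coeff_one]
      | 2 => exact absurd rfl hp
      | (n+3) => simp [hz (n+3) (by omega)]
  rw [h1, h2] at hlt
  linarith

lemma pow_strict_convex {s q : ℝ} (hs : 0 ≤ s) (hq : s < q) {n : ℕ} (hn : 2 ≤ n) :
    q ^ n - s ^ n < (n:ℝ) * q ^ (n-1) * (q - s) := by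
  have hq0 : 0 < q := lt_of_le_of_lt hs hq
  rw [← geom_sum₂_mul q s n]
  have hsum : (∑ i ∈ Finset.range n, q ^ i * s ^ (n - 1 - i)) < (n:ℝ) * q ^ (n-1) := by
    have hle : ∀ i ∈ Finset.range n, q ^ i * s ^ (n - 1 - i) ≤ q ^ (n-1) := by
      intro i hi
      have hi' : i < n := Finset.mem_range.mp hi
      calc q ^ i * s ^ (n - 1 - i) ≤ q ^ i * q ^ (n - 1 - i) :=
            mul_le_mul_of_nonneg_left (pow_le_pow_left₀ hs hq.le _) (by positivity)
        _ = q ^ (i + (n - 1 - i)) := (pow_add q i _).symm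
        _ = q ^ (n - 1) := by congr 1; omega
    have hstrict : q ^ 0 * s ^ (n - 1 - 0) < q ^ (n-1) := by
      simp only [pow_zero, one_mul, Nat.sub_zero]
      exact pow_lt_pow_left₀ hq hs (by omega)
    calc (∑ i ∈ Finset.range n, q ^ i * s ^ (n - 1 - i))
        < ∑ _i ∈ Finset.range n, q ^ (n-1) :=
          Finset.sum_lt_sum hle ⟨0, Finset.mem_range.mpr (by omega), hstrict⟩
      _ = (n:ℝ) * q ^ (n-1) := by
          rw [Finset.sum_const, Finset.card_range, nsmul_eq_mul]
  exact mul_lt_mul_of_pos_right hsum (by linarith)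

lemma key_ineq (c qbar : ℝ) (hc : 0 < c) (hq0 : 0 < qbar) (hq1 : qbar < 1)
    (hfix : c + ξ.xi1 qbar = qbar * ξ.xi2 qbar)
    {p0 : ℕ} (hp3 : 3 ≤ p0) (hcp : 0 < ξ.coeff p0)
    {s : ℝ} (hs0 : 0 ≤ s) (hsq : s < qbar) :
    s * ξ.xi2 qbar < c + ξ.xi1 s := by
  have hdiff : ξ.xi1 qbar - ξ.xi1 s < (qbar - s) * ξ.xi2 qbar := by
    have hsum_s := ξ.summable_xi1_terms hs0 (hsq.le.trans hq1.le)
    have hsum_q := ξ.summable_xi1_terms hq0.le hq1.le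
    have hsum2 := ξ.summable_xi2_terms hq0.le hq1.le
    have hf : Summable (fun p : ℕ =>
        (p:ℝ) * ξ.coeff p * qbar ^ (p-1) - (p:ℝ) * ξ.coeff p * s ^ (p-1)) :=
      hsum_q.sub hsum_s
    have hg : Summable (fun p : ℕ =>
        (p:ℝ) * ((p:ℝ) - 1) * ξ.coeff p * qbar ^ (p-2) * (qbar - s)) :=
      hsum2.mul_right _
    have hterm : ∀ p : ℕ,
        (p:ℝ) * ξ.coeff p * qbar ^ (p-1) - (p:ℝ) * ξ.coeff p * s ^ (p-1)
          ≤ (p:ℝ) * ((p:ℝ) - 1) * ξ.coeff p * qbar ^ (p-2) * (qbar - s) := by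
      intro p
      match p with
      | 0 => simp
      | 1 => simp [ξ.coeff_one]
      | 2 => push_cast; ring_nf; nlinarith [ξ.coeff_nonneg 2]
      | (m+3) =>
        have hcv := pow_strict_convex hs0 hsq (n := m + 2) (by omega)
        have hcnn := ξ.coeff_nonneg (m+3)
        have h1 : ((m+3:ℕ):ℝ) = (m:ℝ) + 3 := by push_cast; ring
        have h2 : (m+3) - 1 = m + 2 := by omega
        have h3 : (m+3) - 2 = m + 1 := by omega
        have h4 : (m+2) - 1 = m + 1 := by omega
        rw [h1, h2, h3]
        rw [h4] at hcv
        have h5 : ((m+2:ℕ):ℝ) = (m:ℝ) + 2 := by push_cast; ring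
        rw [h5] at hcv
        have hpos : (0:ℝ) ≤ ((m:ℝ)+3) * ξ.coeff (m+3) :=
          mul_nonneg (by positivity) hcnn
        have hmul := mul_le_mul_of_nonneg_left (le_of_lt hcv) hpos
        nlinarith [hmul]
    have hstrict :
        (p0:ℝ) * ξ.coeff p0 * qbar ^ (p0-1) - (p0:ℝ) * ξ.coeff p0 * s ^ (p0-1)
          < (p0:ℝ) * ((p0:ℝ) - 1) * ξ.coeff p0 * qbar ^ (p0-2) * (qbar - s) := by
      obtain ⟨m, rfl⟩ : ∃ m, p0 = m + 3 := ⟨p0 - 3, by omega⟩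
      have hcv := pow_strict_convex hs0 hsq (n := m + 2) (by omega)
      have h1 : ((m+3:ℕ):ℝ) = (m:ℝ) + 3 := by push_cast; ring
      have h2 : (m+3) - 1 = m + 2 := by omega
      have h3 : (m+3) - 2 = m + 1 := by omega
      have h4 : (m+2) - 1 = m + 1 := by omega
      rw [h1, h2, h3]
      rw [h4] at hcv
      have h5 : ((m+2:ℕ):ℝ) = (m:ℝ) + 2 := by push_cast; ring
      rw [h5] at hcv
      have hpos : (0:ℝ) < ((m:ℝ)+3) * ξ.coeff (m+3) :=
        mul_pos (by positivity) hcp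
      have hmul := mul_lt_mul_of_pos_left hcv hpos
      nlinarith [hmul]
    have := Summable.tsum_lt_tsum hterm hstrict hf hg
    rw [Summable.tsum_sub hsum_q hsum_s, tsum_mul_right] at this
    calc ξ.xi1 qbar - ξ.xi1 s < ξ.xi2 qbar * (qbar - s) := this
      _ = (qbar - s) * ξ.xi2 qbar := mul_comm _ _
  nlinarith [hdiff]

lemma xi1_continuousOn : ContinuousOn ξ.xi1 (Icc (0:ℝ) 1) := by
  obtain ⟨C, r, hC, hr0, hr1, hd⟩ := ξ.coeff_decay
  refine continuousOn_tsum (f := fun (p : ℕ) (z : ℝ) => (p:ℝ) * ξ.coeff p * z ^ (p-1))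
    (fun p => (continuous_const.mul (continuous_pow _)).continuousOn)
    (aux_summable_geom C hr0 hr1 1) (fun p z hz => ?_)
  obtain ⟨hz0, hz1⟩ := hz
  have hcp := ξ.coeff_nonneg p
  have hdp := hd p
  rw [Real.norm_eq_abs, abs_of_nonneg (by positivity)]
  calc (p:ℝ) * ξ.coeff p * z ^ (p-1) ≤ (p:ℝ) * ξ.coeff p * 1 :=
        mul_le_mul_of_nonneg_left (pow_le_one₀ hz0 hz1) (by positivity)
    _ = (p:ℝ) * ξ.coeff p := mul_one _
    _ ≤ (p:ℝ) * (C * r ^ p) := mul_le_mul_of_nonneg_left hdp (Nat.cast_nonneg p)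
    _ = C * ((p:ℝ)^1 * r ^ p) := by ring

end MixtureFunction


/-- The state-evolution overlaps `b₀ = 0`, `b_{k+1} = ψ_sph(b_k)` (with
`ψ_sph = ξ' ∘ φ_sph` and `φ_sph(t) = q̄ (c + t)/(c + ξ'(q̄))`) form an increasing sequence
converging to `ξ'(q̄)`, and consequently `φ_sph(b_k) → q̄`. -/
theorem state_evolution_converges (ξ : MixtureFunction) (c : ℝ) (hc : 0 < c)
    (hlt : c + ξ.xi1 1 < ξ.xi2 1)
    (qbar : ℝ) (hqbar : qbar ∈ Ioo (0 : ℝ) 1)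
    (hfix : c + ξ.xi1 qbar = qbar * ξ.xi2 qbar)
    (b : ℕ → ℝ) (hb0 : b 0 = 0)
    (hbrec : ∀ k, b (k + 1) = ξ.xi1 (qbar * (c + b k) / (c + ξ.xi1 qbar))) :
    StrictMono b ∧
      Tendsto b atTop (nhds (ξ.xi1 qbar)) ∧
      Tendsto (fun k => qbar * (c + b k) / (c + ξ.xi1 qbar)) atTop (nhds qbar) := by
  obtain ⟨hq0, hq1⟩ := hqbar
  obtain ⟨p0, hp3, hcp⟩ := ξ.exists_big c hc hlt
  set t := ξ.xi1 qbar with ht_def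
  have ht0 : 0 < t := by
    have h := ξ.xi1_strict_mono hp3 hcp (le_refl 0) hq0 hq1.le
    rwa [ξ.xi1_zero] at h
  have hct : 0 < c + t := by linarith
  have hq2 : qbar * ξ.xi2 qbar = c + t := hfix.symm
  -- invariant
  have hinv : ∀ k, 0 ≤ b k ∧ b k < t := by
    intro k
    induction k with
    | zero => rw [hb0]; exact ⟨le_refl 0, ht0⟩
    | succ k ih =>
      obtain ⟨h0k, hkt⟩ := ih
      have hs0 : 0 ≤ qbar * (c + b k) / (c + t) :=
        div_nonneg (mul_nonneg hq0.le (by linarith)) hct.le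
      have hsq : qbar * (c + b k) / (c + t) < qbar := by
        rw [div_lt_iff₀ hct]; nlinarith
      refine ⟨?_, ?_⟩
      · rw [hbrec k]; exact ξ.xi1_nonneg hs0
      · rw [hbrec k]; exact ξ.xi1_strict_mono hp3 hcp hs0 hsq hq1.le
  have hstep : ∀ k, b k < b (k + 1) := by
    intro k
    obtain ⟨h0k, hkt⟩ := hinv k
    have hs0 : 0 ≤ qbar * (c + b k) / (c + t) :=
      div_nonneg (mul_nonneg hq0.le (by linarith)) hct.le
    have hsq : qbar * (c + b k) / (c + t) < qbar := by
      rw [div_lt_iff₀ hct]; nlinarith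
    have hkey := ξ.key_ineq c qbar hc hq0 hq1 hfix hp3 hcp hs0 hsq
    have hsx : qbar * (c + b k) / (c + t) * ξ.xi2 qbar = c + b k := by
      rw [div_mul_eq_mul_div, div_eq_iff hct.ne']
      linear_combination (c + b k) * hq2
    rw [hbrec k]
    rw [hsx] at hkey
    linarith
  have hmono : StrictMono b := strictMono_nat_of_lt_succ hstep
  have hbdd : BddAbove (Set.range b) := ⟨t, by rintro x ⟨k, rfl⟩; exact (hinv k).2.le⟩
  have hlim : Tendsto b atTop (nhds (⨆ k, b k)) := tendsto_atTop_ciSup hmono.monotone hbdd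
  set L := ⨆ k, b k with hL_def
  have hLt : L ≤ t := ciSup_le fun k => (hinv k).2.le
  have hL0 : 0 ≤ L := by
    have h := le_ciSup hbdd 0
    rw [hb0] at h; exact h
  have hphi_tendsto : Tendsto (fun k => qbar * (c + b k) / (c + t)) atTop
      (nhds (qbar * (c + L) / (c + t))) :=
    ((hlim.const_add c).const_mul qbar).div_const _
  have hmemL : qbar * (c + L) / (c + t) ∈ Icc (0:ℝ) 1 := by
    constructor
    · exact div_nonneg (mul_nonneg hq0.le (by linarith)) hct.le
    · rw [div_le_one hct]; nlinarith
  have hmemk : ∀ k, qbar * (c + b k) / (c + t) ∈ Icc (0:ℝ) 1 := by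
    intro k
    obtain ⟨h0k, hkt⟩ := hinv k
    constructor
    · exact div_nonneg (mul_nonneg hq0.le (by linarith)) hct.le
    · rw [div_le_one hct]; nlinarith
  have hwithin : Tendsto (fun k => qbar * (c + b k) / (c + t)) atTop
      (nhdsWithin (qbar * (c + L) / (c + t)) (Icc (0:ℝ) 1)) :=
    tendsto_nhdsWithin_of_tendsto_nhds_of_eventually_within _ hphi_tendsto
      (Eventually.of_forall hmemk)
  have hcomp : Tendsto (fun k => ξ.xi1 (qbar * (c + b k) / (c + t))) atTop
      (nhds (ξ.xi1 (qbar * (c + L) / (c + t)))) :=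
    (ContinuousWithinAt.tendsto (ξ.xi1_continuousOn _ hmemL)).comp hwithin
  have hshift : Tendsto (fun k => b (k + 1)) atTop (nhds L) :=
    hlim.comp (tendsto_add_atTop_nat 1)
  have hLfix : ξ.xi1 (qbar * (c + L) / (c + t)) = L := by
    refine tendsto_nhds_unique ?_ hshift
    have he : (fun k => ξ.xi1 (qbar * (c + b k) / (c + t))) = fun k => b (k + 1) :=
      funext fun k => (hbrec k).symm
    rwa [he] at hcomp
  have hLeq : L = t := by
    rcases lt_or_eq_of_le hLt with hL | hL
    · exfalso
      have hs0 : 0 ≤ qbar * (c + L) / (c + t) :=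
        div_nonneg (mul_nonneg hq0.le (by linarith)) hct.le
      have hsq : qbar * (c + L) / (c + t) < qbar := by
        rw [div_lt_iff₀ hct]; nlinarith
      have hkey := ξ.key_ineq c qbar hc hq0 hq1 hfix hp3 hcp hs0 hsq
      have hsx : qbar * (c + L) / (c + t) * ξ.xi2 qbar = c + L := by
        rw [div_mul_eq_mul_div, div_eq_iff hct.ne']
        linear_combination (c + L) * hq2
      rw [hsx, hLfix] at hkey
      exact lt_irrefl _ hkey
    · exact hL
  rw [hLeq] at hlim hphi_tendsto
  have hphit : qbar * (c + t) / (c + t) = qbar := by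
    rw [mul_div_assoc, div_self hct.ne', mul_one]
  rw [hphit] at hphi_tendsto
  exact ⟨hmono, hlim, hphi_tendsto⟩
end

section
/- Let ξ be a mixture function, let c>0 satisfy c+ξ'(1)<ξ''(1), and let q̄∈(0,1) be the unique solution of c+ξ'(q̄)=q̄·ξ''(q̄). Let α:[0,1]→[0,∞) be nondecreasing with ∫₀¹α(r)dr<∞, set a(q)=∫₀^q α(r)dr, and let L∈ℝ satisfy L>∫₀¹α(r)dr. Then (c+ξ'(1))·L − ∫₀¹ ξ''(q)·a(q) dq + ∫₀¹ (L−a(q))^{-1} dq ≥ 2q̄·√(ξ''(q̄)) + 2∫_{q̄}^1 √(ξ''(q)) dq. -/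
open Set Filter MeasureTheory

/-!
Write `B = L - a`, which is positive on `[0,1]`. Since `∫₀¹ ξ'' = ξ'(1)`, the left-hand side equals
`cL + ∫₀¹ (ξ''B + B⁻¹)`. On `[q̄,1]`, AM–GM gives `ξ''B + B⁻¹ ≥ 2√ξ''`. On `[0,q̄]`, put
`y = √ξ''(q̄)`: the tangent bound `B⁻¹ ≥ 2y - y²B`, together with `ξ'' ≤ y²` (monotonicity) and
`B ≤ L`, gives `ξ''B + B⁻¹ ≥ 2y - y²L + ξ''L`, whose integral over `[0,q̄]` is `2q̄y - cL` by the
fixed-point equation `c + ξ'(q̄) = q̄ ξ''(q̄)`.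
-/

namespace MixtureFunction

variable (ξ : MixtureFunction)

lemma xi2_coeff_nonneg (p : ℕ) : 0 ≤ (p : ℝ) * ((p : ℝ) - 1) * ξ.coeff p := by
  rcases p with _ | p
  · simp
  · have := ξ.coeff_nonneg (p + 1)
    rw [Nat.cast_succ, add_sub_cancel_right]
    positivity

lemma xi2_nonneg {z : ℝ} (hz : 0 ≤ z) : 0 ≤ ξ.xi2 z :=
  tsum_nonneg fun p => mul_nonneg (ξ.xi2_coeff_nonneg p) (pow_nonneg hz _)

lemma xi1_term_zero (p : ℕ) : (p : ℝ) * ξ.coeff p * (0 : ℝ) ^ (p - 1) = 0 := by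
  rcases p with _ | _ | p
  · simp
  · simp [ξ.coeff_one]
  · simp

lemma norm_xi2_term_le (p : ℕ) {y t : ℝ} (ht : 1 ≤ t) (hy : |y| ≤ t) :
    ‖(p : ℝ) * ((p : ℝ) - 1) * ξ.coeff p * y ^ (p - 2)‖ ≤ (p : ℝ) ^ 2 * ξ.coeff p * t ^ p := by
  have hcoeff : (p : ℝ) * ((p : ℝ) - 1) ≤ (p : ℝ) ^ 2 := by
    nlinarith [(p.cast_nonneg : (0 : ℝ) ≤ p)]
  have hpow : |y| ^ (p - 2) ≤ t ^ p :=
    (pow_le_pow_left₀ (abs_nonneg y) hy _).trans (pow_le_pow_right₀ ht (Nat.sub_le p 2))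
  rw [Real.norm_eq_abs, abs_mul, abs_of_nonneg (ξ.xi2_coeff_nonneg p), abs_pow]
  have := ξ.coeff_nonneg p
  gcongr

lemma exists_one_lt_summable :
    ∃ t, 1 < t ∧ Summable fun p : ℕ => (p : ℝ) ^ 2 * ξ.coeff p * t ^ p := by
  obtain ⟨C, r, hC, hr0, hr1, hdecay⟩ := ξ.coeff_decay
  refine ⟨2 / (1 + r), by rw [lt_div_iff₀ (by linarith)]; linarith, ?_⟩
  have hrt : ‖r * (2 / (1 + r))‖ < 1 := by
    rw [Real.norm_of_nonneg (by positivity), mul_div_assoc', div_lt_one (by linarith)]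
    nlinarith
  refine .of_nonneg_of_le (fun p => by have := ξ.coeff_nonneg p; positivity) (fun p => ?_)
    ((summable_pow_mul_geometric_of_norm_lt_one 2 hrt).mul_left C)
  calc (p : ℝ) ^ 2 * ξ.coeff p * (2 / (1 + r)) ^ p
      ≤ (p : ℝ) ^ 2 * (C * r ^ p) * (2 / (1 + r)) ^ p := by gcongr; exact hdecay p
    _ = C * ((p : ℝ) ^ 2 * (r * (2 / (1 + r))) ^ p) := by ring

lemma summable_xi2 {z : ℝ} (hz : |z| ≤ 1) :
    Summable fun p : ℕ => (p : ℝ) * ((p : ℝ) - 1) * ξ.coeff p * z ^ (p - 2) := by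
  obtain ⟨t, ht, hsum⟩ := ξ.exists_one_lt_summable
  exact hsum.of_norm_bounded fun p => ξ.norm_xi2_term_le p ht.le (hz.trans ht.le)

lemma xi2_monotoneOn : MonotoneOn ξ.xi2 (Icc 0 1) := fun x hx y hy hxy =>
  Summable.tsum_le_tsum
    (fun p => mul_le_mul_of_nonneg_left (pow_le_pow_left₀ hx.1 hxy _) (ξ.xi2_coeff_nonneg p))
    (ξ.summable_xi2 (abs_le.2 ⟨by linarith [hx.1], hx.2⟩))
    (ξ.summable_xi2 (abs_le.2 ⟨by linarith [hy.1], hy.2⟩))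

lemma hasDerivAt_xi1_term (a : ℝ) (p : ℕ) (y : ℝ) :
    HasDerivAt (fun z => (p : ℝ) * a * z ^ (p - 1))
      ((p : ℝ) * ((p : ℝ) - 1) * a * y ^ (p - 2)) y := by
  rcases p with _ | p
  · simpa using hasDerivAt_const y (0 : ℝ)
  · rw [Nat.add_sub_cancel]
    refine ((hasDerivAt_pow p y).const_mul (((p + 1 : ℕ) : ℝ) * a)).congr_deriv ?_
    rw [show p + 1 - 2 = p - 1 by omega]
    push_cast
    ring

lemma hasDerivAt_xi1 {x : ℝ} (hx : |x| ≤ 1) : HasDerivAt ξ.xi1 (ξ.xi2 x) x := by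
  obtain ⟨t, ht, hsum⟩ := ξ.exists_one_lt_summable
  have hball : ∀ {y : ℝ}, |y| ≤ 1 → y ∈ Ioo (-t) t := fun hy => abs_lt.1 (hy.trans_lt ht)
  unfold xi1 xi2
  refine hasDerivAt_tsum_of_isPreconnected hsum isOpen_Ioo isPreconnected_Ioo
    (fun p y _ => hasDerivAt_xi1_term _ p y)
    (fun p y hy => ξ.norm_xi2_term_le p ht.le (abs_lt.2 hy).le)
    (hball (y := 0) (by norm_num)) ?_ (hball hx)
  simpa only [ξ.xi1_term_zero] using summable_zero

lemma integral_xi2 {y : ℝ} (hy : y ∈ Icc (0 : ℝ) 1) : ∫ q in (0 : ℝ)..y, ξ.xi2 q = ξ.xi1 y := by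
  have hsub : uIcc 0 y ⊆ Icc 0 1 := uIcc_subset_Icc ⟨le_rfl, zero_le_one⟩ hy
  rw [intervalIntegral.integral_eq_sub_of_hasDerivAt
    (fun q hq => ξ.hasDerivAt_xi1 (abs_le.2 ⟨by linarith [(hsub hq).1], (hsub hq).2⟩))
    (ξ.xi2_monotoneOn.mono hsub).intervalIntegrable, ξ.xi1_zero, sub_zero]

end MixtureFunction

lemma two_mul_sub_sq_mul_le_inv (y : ℝ) {b : ℝ} (hb : 0 < b) : 2 * y - y ^ 2 * b ≤ b⁻¹ := by
  rw [← one_div, le_div_iff₀ hb]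
  nlinarith [sq_nonneg (y * b - 1)]

lemma two_mul_sqrt_le_mul_add_inv {g b : ℝ} (hg : 0 ≤ g) (hb : 0 < b) : 2 * √g ≤ g * b + b⁻¹ := by
  have := two_mul_sub_sq_mul_le_inv (√g) hb
  rw [Real.sq_sqrt hg] at this
  linarith

section IntegralBounds

variable {g B : ℝ → ℝ} {u v : ℝ}

lemma intervalIntegrable_mul_add_inv (huv : u ≤ v) (hg : IntervalIntegrable g volume u v)
    (hB : ContinuousOn B (Icc u v)) (hB0 : ∀ q ∈ Icc u v, B q ≠ 0) :
    IntervalIntegrable (fun q => g q * B q + (B q)⁻¹) volume u v := by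
  rw [← uIcc_of_le huv] at hB hB0
  exact (hg.mul_continuousOn hB).add (hB.inv₀ hB0).intervalIntegrable

lemma two_mul_integral_sqrt_le (huv : u ≤ v) (hg0 : ∀ q ∈ Icc u v, 0 ≤ g q)
    (hg : MonotoneOn g (Icc u v)) (hB : ContinuousOn B (Icc u v)) (hB0 : ∀ q ∈ Icc u v, 0 < B q) :
    2 * ∫ q in u..v, √(g q) ≤ ∫ q in u..v, g q * B q + (B q)⁻¹ := by
  rw [← uIcc_of_le huv] at hg
  rw [← intervalIntegral.integral_const_mul]
  refine intervalIntegral.integral_mono_on huv ?_ ?_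
    fun q hq => two_mul_sqrt_le_mul_add_inv (hg0 q hq) (hB0 q hq)
  · exact (Real.sqrt_monotone.comp_monotoneOn hg).intervalIntegrable.const_mul 2
  · exact intervalIntegrable_mul_add_inv huv hg.intervalIntegrable hB fun q hq => (hB0 q hq).ne'

lemma le_integral_mul_add_inv_of_le_sq {y L : ℝ} (huv : u ≤ v)
    (hg : IntervalIntegrable g volume u v)
    (hgy : ∀ q ∈ Icc u v, g q ≤ y ^ 2) (hB : ContinuousOn B (Icc u v))
    (hB0 : ∀ q ∈ Icc u v, 0 < B q) (hBL : ∀ q ∈ Icc u v, B q ≤ L) :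
    (2 * y - y ^ 2 * L) * (v - u) + L * ∫ q in u..v, g q ≤ ∫ q in u..v, g q * B q + (B q)⁻¹ := by
  have hint := intervalIntegrable_const (c := 2 * y - y ^ 2 * L) |>.add (hg.const_mul L)
  calc (2 * y - y ^ 2 * L) * (v - u) + L * ∫ q in u..v, g q
      = ∫ q in u..v, 2 * y - y ^ 2 * L + L * g q := by
        rw [intervalIntegral.integral_add intervalIntegrable_const (hg.const_mul L),
          intervalIntegral.integral_const, intervalIntegral.integral_const_mul, smul_eq_mul]
        ring
    _ ≤ _ := intervalIntegral.integral_mono_on huv hint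
      (intervalIntegrable_mul_add_inv huv hg hB fun q hq => (hB0 q hq).ne') fun q hq => ?_
  -- `gB + B⁻¹ ≥ gB + 2y - y²B = 2y - y²L + gL + (y² - g)(L - B)`
  have := two_mul_sub_sq_mul_le_inv y (hB0 q hq)
  nlinarith [mul_nonneg (sub_nonneg.2 (hgy q hq)) (sub_nonneg.2 (hBL q hq))]

end IntegralBounds

theorem two_mul_sqrt_add_integral_sqrt_le {g B : ℝ → ℝ} {c L q₀ : ℝ}
    (hg0 : ∀ q ∈ Icc 0 1, 0 ≤ g q) (hg : MonotoneOn g (Icc 0 1)) (hq₀ : q₀ ∈ Icc 0 1)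
    (hfix : c + ∫ q in (0 : ℝ)..q₀, g q = q₀ * g q₀) (hB : ContinuousOn B (Icc 0 1))
    (hB0 : ∀ q ∈ Icc 0 1, 0 < B q) (hBL : ∀ q ∈ Icc 0 1, B q ≤ L) :
    2 * q₀ * √(g q₀) + 2 * ∫ q in q₀..1, √(g q) ≤
      c * L + ∫ q in (0 : ℝ)..1, g q * B q + (B q)⁻¹ := by
  have hlow : Icc 0 q₀ ⊆ Icc 0 1 := Icc_subset_Icc le_rfl hq₀.2
  have hupp : Icc q₀ 1 ⊆ Icc 0 1 := Icc_subset_Icc hq₀.1 le_rfl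
  have hg_low : IntervalIntegrable g volume 0 q₀ :=
    (hg.mono (uIcc_of_le hq₀.1 ▸ hlow)).intervalIntegrable
  have hg_upp : IntervalIntegrable g volume q₀ 1 :=
    (hg.mono (uIcc_of_le hq₀.2 ▸ hupp)).intervalIntegrable
  have h_low := le_integral_mul_add_inv_of_le_sq (y := √(g q₀)) hq₀.1 hg_low
    (fun q hq => (Real.sq_sqrt (hg0 q₀ hq₀)).symm ▸ hg (hlow hq) hq₀ hq.2)
    (hB.mono hlow) (fun q hq => hB0 q (hlow hq)) (fun q hq => hBL q (hlow hq))
  have h_upp := two_mul_integral_sqrt_le hq₀.2 (fun q hq => hg0 q (hupp hq)) (hg.mono hupp)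
    (hB.mono hupp) (fun q hq => hB0 q (hupp hq))
  rw [Real.sq_sqrt (hg0 q₀ hq₀)] at h_low
  rw [← intervalIntegral.integral_add_adjacent_intervals (b := q₀)
    (intervalIntegrable_mul_add_inv hq₀.1 hg_low (hB.mono hlow) fun q hq => (hB0 q (hlow hq)).ne')
    (intervalIntegrable_mul_add_inv hq₀.2 hg_upp
      (hB.mono hupp) fun q hq => (hB0 q (hupp hq)).ne')]
  have hfixL : L * c + L * ∫ q in (0 : ℝ)..q₀, g q = L * (q₀ * g q₀) := by rw [← hfix]; ring
  linarith

lemma integral_mem_Icc_of_nonneg {α : ℝ → ℝ} {a b q : ℝ} (hα0 : ∀ r ∈ Icc a b, 0 ≤ α r)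
    (hα : IntervalIntegrable α volume a b) (hq : q ∈ Icc a b) :
    ∫ r in a..q, α r ∈ Icc 0 (∫ r in a..b, α r) :=
  ⟨intervalIntegral.integral_nonneg hq.1 fun r hr => hα0 r ⟨hr.1, hr.2.trans hq.2⟩,
    intervalIntegral.integral_mono_interval le_rfl hq.1 hq.2
      ((ae_restrict_mem measurableSet_Ioc).mono fun r hr => hα0 r (Ioc_subset_Icc_self hr)) hα⟩

theorem crisanti_sommers_lower_bound_general (ξ : MixtureFunction) (c : ℝ)
    (qbar : ℝ) (hqbar : qbar ∈ Ioo (0 : ℝ) 1)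
    (hfix : c + ξ.xi1 qbar = qbar * ξ.xi2 qbar)
    (α : ℝ → ℝ) (hα0 : ∀ r ∈ Icc (0 : ℝ) 1, 0 ≤ α r)
    (hαint : IntervalIntegrable α volume 0 1)
    (L : ℝ) (hL : (∫ r in (0 : ℝ)..1, α r) < L) :
    2 * qbar * Real.sqrt (ξ.xi2 qbar) + 2 * (∫ q in qbar..1, Real.sqrt (ξ.xi2 q)) ≤
      (c + ξ.xi1 1) * L - (∫ q in (0 : ℝ)..1, ξ.xi2 q * (∫ r in (0 : ℝ)..q, α r))
        + (∫ q in (0 : ℝ)..1, (L - ∫ r in (0 : ℝ)..q, α r)⁻¹) := by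
  set A : ℝ → ℝ := fun q => ∫ r in (0 : ℝ)..q, α r
  have hA : ∀ q ∈ Icc (0 : ℝ) 1, A q ∈ Icc 0 (A 1) := fun q hq =>
    integral_mem_Icc_of_nonneg hα0 hαint hq
  have hAcont : ContinuousOn A (Icc 0 1) := uIcc_of_le (zero_le_one (α := ℝ)) ▸
    intervalIntegral.continuousOn_primitive_interval' hαint left_mem_uIcc
  have hB0 : ∀ q ∈ Icc (0 : ℝ) 1, 0 < L - A q := fun q hq => by linarith [(hA q hq).2]
  have hbound := two_mul_sqrt_add_integral_sqrt_le (B := fun q => L - A q) (L := L)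
    (fun q hq => ξ.xi2_nonneg hq.1) ξ.xi2_monotoneOn (Ioo_subset_Icc_self hqbar)
    (by rwa [ξ.integral_xi2 (Ioo_subset_Icc_self hqbar)]) (continuousOn_const.sub hAcont) hB0
    (fun q hq => by linarith [(hA q hq).1])
  have hxi2 : IntervalIntegrable ξ.xi2 volume 0 1 :=
    (ξ.xi2_monotoneOn.mono (uIcc_of_le zero_le_one).subset).intervalIntegrable
  have hsplit : ∫ q in (0 : ℝ)..1, ξ.xi2 q * (L - A q) + (L - A q)⁻¹
      = ξ.xi1 1 * L - (∫ q in (0 : ℝ)..1, ξ.xi2 q * A q) + ∫ q in (0 : ℝ)..1, (L - A q)⁻¹ := by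
    rw [← uIcc_of_le zero_le_one] at hAcont hB0
    have hinv : IntervalIntegrable (fun q => (L - A q)⁻¹) volume 0 1 :=
      ((continuousOn_const.sub hAcont).inv₀ fun q hq => (hB0 q hq).ne').intervalIntegrable
    simp only [mul_sub]
    rw [intervalIntegral.integral_add ((hxi2.mul_const L).sub (hxi2.mul_continuousOn hAcont)) hinv,
      intervalIntegral.integral_sub (hxi2.mul_const L) (hxi2.mul_continuousOn hAcont),
      intervalIntegral.integral_mul_const, ξ.integral_xi2 ⟨zero_le_one, le_rfl⟩]
  linarith

/-- Lower bound on (twice) Chen's zero-temperature Crisanti–Sommers functional: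
for any nondecreasing, integrable `α : [0,1] → [0,∞)` with `a(q) = ∫₀^q α` and any
`L > ∫₀¹ α`, one has
`(c + ξ'(1)) L - ∫₀¹ ξ''(q) a(q) dq + ∫₀¹ (L - a(q))⁻¹ dq ≥ 2 q̄ √(ξ''(q̄)) + 2 ∫_{q̄}¹ √(ξ''(q)) dq`. -/
theorem crisanti_sommers_lower_bound (ξ : MixtureFunction) (c : ℝ) (hc : 0 < c)
    (hlt : c + ξ.xi1 1 < ξ.xi2 1)
    (qbar : ℝ) (hqbar : qbar ∈ Ioo (0 : ℝ) 1)
    (hfix : c + ξ.xi1 qbar = qbar * ξ.xi2 qbar)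
    (α : ℝ → ℝ) (hα0 : ∀ r ∈ Icc (0 : ℝ) 1, 0 ≤ α r)
    (hαmono : MonotoneOn α (Icc 0 1))
    (hαint : IntervalIntegrable α volume 0 1)
    (L : ℝ) (hL : (∫ r in (0 : ℝ)..1, α r) < L) :
    2 * qbar * Real.sqrt (ξ.xi2 qbar) + 2 * (∫ q in qbar..1, Real.sqrt (ξ.xi2 q)) ≤
      (c + ξ.xi1 1) * L - (∫ q in (0 : ℝ)..1, ξ.xi2 q * (∫ r in (0 : ℝ)..q, α r))
        + (∫ q in (0 : ℝ)..1, (L - ∫ r in (0 : ℝ)..q, α r)⁻¹) :=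
  crisanti_sommers_lower_bound_general ξ c qbar hqbar hfix α hα0 hαint L hL
end

section
/- Let ξ be a mixture function, let c>0 satisfy c+ξ'(1)<ξ''(1), and let q̄∈(0,1) be the unique solution of c+ξ'(q̄)=q̄·ξ''(q̄). Assume the map q↦ξ''(q)^{-1/2} is concave on [q̄,1]. Define L=ξ''(q̄)^{-1/2} and α(s)=0 for s∈[0,q̄), α(s)=ξ'''(s)/(2·ξ''(s)^{3/2}) for s∈[q̄,1], and set a(q)=∫₀^q α(r)dr. Then L>∫₀¹α(r)dr and equality holds in the ground-state lower bound: (c+ξ'(1))·L − ∫₀¹ ξ''(q)·a(q) dq + ∫₀¹ (L−a(q))^{-1} dq = 2q̄·√(ξ''(q̄)) + 2∫_{q̄}^1 √(ξ''(q)) dq. -/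
/-!
On `[q̄, 1]` the order parameter `α` is the derivative of `-ξ''^{-1/2}`, so `a = 0` on `[0, q̄]`
and `a = L - ξ''^{-1/2}` on `[q̄, 1]`; in particular `(L - a)⁻¹ = √ξ''` there. Hence
`∫ ξ'' a = L (ξ'(1) - ξ'(q̄)) - ∫_{q̄}^1 √ξ''` and `∫ (L - a)⁻¹ = q̄ √ξ''(q̄) + ∫_{q̄}^1 √ξ''`, and
the fixed-point equation `c + ξ'(q̄) = q̄ ξ''(q̄)` turns the remaining term `(c + ξ'(q̄)) L` into
`q̄ √ξ''(q̄)`. The calculus on `[0, 1]` is justified by termwise differentiation of the power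
series, which converges on a disc of radius `> 1`.
-/

open Set Filter MeasureTheory

lemma hasDerivAt_neg_inv_sqrt {g : ℝ → ℝ} {g' x : ℝ} (hg : HasDerivAt g g' x) (hx : 0 < g x) :
    HasDerivAt (fun t => -(√(g t))⁻¹) (g' / (2 * g x ^ ((3 : ℝ) / 2))) x := by
  have hsqrt : 0 < √(g x) := Real.sqrt_pos.2 hx
  have hpow : g x ^ ((3 : ℝ) / 2) = g x * √(g x) := by
    rw [show (3 : ℝ) / 2 = 1 + 1 / 2 by norm_num, Real.rpow_add hx, Real.rpow_one,
      ← Real.sqrt_eq_rpow]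
  refine ((hg.sqrt hx.ne').inv hsqrt.ne').neg.congr_deriv ?_
  rw [hpow, Real.sq_sqrt hx.le]
  field_simp

lemma integral_deriv_div_rpow_three_halves {g g' : ℝ → ℝ} {a b : ℝ} (hab : a ≤ b)
    (hg : ∀ x ∈ Icc a b, HasDerivAt g (g' x) x) (hpos : ∀ x ∈ Icc a b, 0 < g x)
    (hint : IntervalIntegrable (fun x => g' x / (2 * g x ^ ((3 : ℝ) / 2))) volume a b) :
    ∫ x in a..b, g' x / (2 * g x ^ ((3 : ℝ) / 2)) = (√(g a))⁻¹ - (√(g b))⁻¹ := by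
  have hderiv : ∀ x ∈ uIcc a b, HasDerivAt (fun t => -(√(g t))⁻¹)
      (g' x / (2 * g x ^ ((3 : ℝ) / 2))) x := by
    rw [uIcc_of_le hab]
    exact fun x hx => hasDerivAt_neg_inv_sqrt (hg x hx) (hpos x hx)
  rw [intervalIntegral.integral_eq_sub_of_hasDerivAt hderiv hint]
  ring

lemma integral_eq_add_of_eqOn_Ioo {F G H : ℝ → ℝ} {a b c : ℝ} (hab : a ≤ b) (hbc : b ≤ c)
    (hG : IntervalIntegrable G volume a b) (hH : IntervalIntegrable H volume b c)
    (hFG : EqOn F G (Ioo a b)) (hFH : EqOn F H (Ioo b c)) :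
    ∫ x in a..c, F x = (∫ x in a..b, G x) + ∫ x in b..c, H x := by
  rw [← intervalIntegral.integral_add_adjacent_intervals
      (hG.congr_uIoo (uIoo_of_le hab ▸ hFG.symm)) (hH.congr_uIoo (uIoo_of_le hbc ▸ hFH.symm)),
    intervalIntegral.integral_congr_Ioo_of_le hab hFG,
    intervalIntegral.integral_congr_Ioo_of_le hbc hFH]

lemma integral_ite_lt {f : ℝ → ℝ} {b x₀ q : ℝ} (hb : b ≤ x₀) (hq : x₀ ≤ q)
    (hf : IntervalIntegrable f volume x₀ q) :
    ∫ r in b..q, (if r < x₀ then 0 else f r) = ∫ r in x₀..q, f r := by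
  rw [integral_eq_add_of_eqOn_Ioo hb hq intervalIntegrable_const hf (G := fun _ => 0)
    (fun r hr => if_pos hr.2) (fun r hr => if_neg hr.1.not_gt), intervalIntegral.integral_zero,
    zero_add]

lemma integral_ite_lt_of_le (f : ℝ → ℝ) {b x₀ q : ℝ} (hbq : b ≤ q) (hq : q ≤ x₀) :
    ∫ r in b..q, (if r < x₀ then 0 else f r) = 0 :=
  (intervalIntegral.integral_congr_Ioo_of_le hbq (g := 0)
    fun _ hr => if_pos (hr.2.trans_le hq)).trans intervalIntegral.integral_zero

/-- The `k`-th termwise derivative of `∑ a p z ^ p`. Since `p.descFactorial k = 0` for `p < k`,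
the truncated exponent `p - k` does no harm. -/
noncomputable def derivSeries (a : ℕ → ℝ) (k : ℕ) (z : ℝ) : ℝ :=
  ∑' p : ℕ, (p.descFactorial k : ℝ) * a p * z ^ (p - k)

lemma hasDerivAt_descFactorial_mul_pow (p k : ℕ) (c y : ℝ) :
    HasDerivAt (fun z : ℝ => (p.descFactorial k : ℝ) * c * z ^ (p - k))
      ((p.descFactorial (k + 1) : ℝ) * c * y ^ (p - (k + 1))) y := by
  refine ((hasDerivAt_pow (p - k) y).const_mul ((p.descFactorial k : ℝ) * c)).congr_deriv ?_
  rw [Nat.descFactorial_succ, Nat.sub_sub]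
  push_cast
  ring

lemma norm_descFactorial_mul_pow_le {a : ℕ → ℝ} {C r R : ℝ} (hR : 1 ≤ R)
    (ha : ∀ p, |a p| ≤ C * r ^ p) (p k : ℕ) {y : ℝ} (hy : |y| ≤ R) :
    ‖(p.descFactorial k : ℝ) * a p * y ^ (p - k)‖ ≤ C * ((p : ℝ) ^ k * (r * R) ^ p) := by
  rw [norm_mul, norm_mul, norm_pow, Real.norm_natCast, Real.norm_eq_abs, Real.norm_eq_abs]
  calc (p.descFactorial k : ℝ) * |a p| * |y| ^ (p - k)
      ≤ (p : ℝ) ^ k * (C * r ^ p) * R ^ p := by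
        have hCr : 0 ≤ C * r ^ p := (abs_nonneg _).trans (ha p)
        gcongr
        · exact_mod_cast Nat.descFactorial_le_pow p k
        · exact ha p
        · exact (pow_le_pow_left₀ (abs_nonneg y) hy _).trans
            (pow_le_pow_right₀ hR (Nat.sub_le p k))
    _ = C * ((p : ℝ) ^ k * (r * R) ^ p) := by ring

lemma summable_mul_pow_mul_geometric (C : ℝ) (k : ℕ) {ρ : ℝ} (hρ : 0 ≤ ρ) (hρ1 : ρ < 1) :
    Summable fun p : ℕ => C * ((p : ℝ) ^ k * ρ ^ p) :=
  (summable_pow_mul_geometric_of_norm_lt_one k (by rwa [Real.norm_of_nonneg hρ])).mul_left C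

section

variable {a : ℕ → ℝ} {C r R : ℝ}

lemma summable_derivSeries (hr : 0 ≤ r) (hR : 1 ≤ R) (hrR : r * R < 1)
    (ha : ∀ p, |a p| ≤ C * r ^ p) (k : ℕ) {y : ℝ} (hy : |y| ≤ R) :
    Summable fun p : ℕ => (p.descFactorial k : ℝ) * a p * y ^ (p - k) :=
  .of_norm_bounded (summable_mul_pow_mul_geometric C k (by positivity) hrR)
    fun p => norm_descFactorial_mul_pow_le hR ha p k hy

lemma hasDerivAt_derivSeries (hr : 0 ≤ r) (hR : 1 ≤ R) (hrR : r * R < 1)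
    (ha : ∀ p, |a p| ≤ C * r ^ p) (k : ℕ) {y : ℝ} (hy : |y| < R) :
    HasDerivAt (derivSeries a k) (derivSeries a (k + 1) y) y := by
  have hball : ∀ z ∈ Ioo (-R) R, |z| ≤ R := fun z hz => (abs_lt.2 hz).le
  exact hasDerivAt_tsum_of_isPreconnected
    (summable_mul_pow_mul_geometric C (k + 1) (by positivity) hrR) isOpen_Ioo
    (convex_Ioo _ _).isPreconnected
    (fun p z _ => hasDerivAt_descFactorial_mul_pow p k (a p) z)
    (fun p z hz => norm_descFactorial_mul_pow_le hR ha p (k + 1) (hball z hz))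
    (y₀ := 0) (by constructor <;> linarith)
    (summable_derivSeries hr hR hrR ha k (by simp; linarith)) (abs_lt.1 hy)

end

namespace MixtureFunction

variable (ξ : MixtureFunction)

lemma xi1_eq_derivSeries : ξ.xi1 = derivSeries ξ.coeff 1 := by
  ext z; simp [xi1, derivSeries]

lemma xi2_eq_derivSeries : ξ.xi2 = derivSeries ξ.coeff 2 := by
  ext z
  simp only [xi2, derivSeries, Nat.cast_descFactorial_two]

lemma xi3_eq_derivSeries : ξ.xi3 = derivSeries ξ.coeff 3 := by
  ext z
  simp only [xi3, derivSeries, ← descPochhammer_eval_eq_descFactorial, descPochhammer_succ_eval,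
    descPochhammer_zero, Polynomial.eval_one]
  congr 1 with p
  ring

lemma exists_abs_coeff_le_geometric :
    ∃ C r R : ℝ, 0 ≤ r ∧ 1 < R ∧ r * R < 1 ∧ ∀ p, |ξ.coeff p| ≤ C * r ^ p := by
  obtain ⟨C, r, -, hr0, hr1, hC⟩ := ξ.coeff_decay
  refine ⟨C, r, (1 + r⁻¹) / 2, hr0.le, ?_, ?_, fun p => ?_⟩
  · linarith [one_lt_inv₀ hr0 |>.mpr hr1]
  · field_simp; linarith
  · rw [abs_of_nonneg (ξ.coeff_nonneg p)]; exact hC p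

variable {y : ℝ}

lemma hasDerivAt_derivSeries_coeff (k : ℕ) (hy : y ∈ Icc (-1) 1) :
    HasDerivAt (derivSeries ξ.coeff k) (derivSeries ξ.coeff (k + 1) y) y := by
  obtain ⟨C, r, R, hr, hR, hrR, hC⟩ := ξ.exists_abs_coeff_le_geometric
  exact _root_.hasDerivAt_derivSeries hr hR.le hrR hC k ((abs_le.2 hy).trans_lt hR)

lemma hasDerivAt_xi1_s8 (hy : y ∈ Icc (-1) 1) : HasDerivAt ξ.xi1 (ξ.xi2 y) y := by
  rw [xi1_eq_derivSeries, xi2_eq_derivSeries]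
  exact ξ.hasDerivAt_derivSeries_coeff 1 hy

lemma hasDerivAt_xi2 (hy : y ∈ Icc (-1) 1) : HasDerivAt ξ.xi2 (ξ.xi3 y) y := by
  rw [xi2_eq_derivSeries, xi3_eq_derivSeries]
  exact ξ.hasDerivAt_derivSeries_coeff 2 hy

lemma continuousOn_xi2 : ContinuousOn ξ.xi2 (Icc (-1) 1) :=
  fun _ hy => (ξ.hasDerivAt_xi2 hy).continuousAt.continuousWithinAt

lemma continuousOn_xi3 : ContinuousOn ξ.xi3 (Icc (-1) 1) := by
  rw [xi3_eq_derivSeries]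
  exact fun _ hy => (ξ.hasDerivAt_derivSeries_coeff 3 hy).continuousAt.continuousWithinAt

lemma xi2_pos (hy0 : 0 < y) (hy1 : y ≤ 1) : 0 < ξ.xi2 y := by
  obtain ⟨C, r, R, hr, hR, hrR, hC⟩ := ξ.exists_abs_coeff_le_geometric
  obtain ⟨p, hp⟩ := ξ.nontrivial
  have hp2 : 2 ≤ p := by
    by_contra! h
    interval_cases p
    exacts [hp ξ.coeff_zero, hp ξ.coeff_one]
  rw [xi2_eq_derivSeries]
  have hy : |y| ≤ R := (abs_of_pos hy0).trans_le (hy1.trans hR.le)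
  refine (summable_derivSeries hr hR.le hrR hC 2 hy).tsum_pos
    (fun n => by have := ξ.coeff_nonneg n; positivity) p ?_
  have : 0 < p.descFactorial 2 :=
    Nat.pos_of_ne_zero (Nat.descFactorial_eq_zero_iff_lt.not.2 (by omega))
  have := (ξ.coeff_nonneg p).lt_of_ne' hp
  positivity

lemma continuousOn_xi3_div_rpow :
    ContinuousOn (fun s => ξ.xi3 s / (2 * ξ.xi2 s ^ ((3 : ℝ) / 2))) (Ioc 0 1) := by
  have hsub : Ioc (0 : ℝ) 1 ⊆ Icc (-1) 1 := fun y hy => ⟨by linarith [hy.1], hy.2⟩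
  refine (ξ.continuousOn_xi3.mono hsub).div (continuousOn_const.mul
    ((ξ.continuousOn_xi2.mono hsub).rpow_const fun y hy => .inl (ξ.xi2_pos hy.1 hy.2).ne'))
    fun y hy => ?_
  have := ξ.xi2_pos hy.1 hy.2
  positivity

variable {a : ℝ → ℝ} {q₀ L : ℝ}

lemma integral_xi2_mul_eq (hq₀ : q₀ ∈ Icc 0 1) (ha_left : ∀ q ∈ Ioo 0 q₀, a q = 0)
    (ha_right : ∀ q ∈ Ioo q₀ 1, a q = L - (√(ξ.xi2 q))⁻¹) :
    ∫ q in 0..1, ξ.xi2 q * a q = L * (ξ.xi1 1 - ξ.xi1 q₀) - ∫ q in q₀..1, √(ξ.xi2 q) := by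
  have hsub : Icc q₀ 1 ⊆ Icc (-1) 1 := Icc_subset_Icc (by linarith [hq₀.1]) le_rfl
  have hcont : ContinuousOn ξ.xi2 (Icc q₀ 1) := ξ.continuousOn_xi2.mono hsub
  have hL : IntervalIntegrable (fun q => L * ξ.xi2 q) volume q₀ 1 :=
    (continuousOn_const.mul hcont).intervalIntegrable_of_Icc hq₀.2
  have hsqrt : IntervalIntegrable (fun q => √(ξ.xi2 q)) volume q₀ 1 :=
    hcont.sqrt.intervalIntegrable_of_Icc hq₀.2
  rw [integral_eq_add_of_eqOn_Ioo hq₀.1 hq₀.2 intervalIntegrable_const (hL.sub hsqrt)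
      (G := fun _ => 0) (fun q hq => by simp [ha_left q hq]) fun q hq => ?_,
    intervalIntegral.integral_zero, zero_add, intervalIntegral.integral_sub hL hsqrt,
    intervalIntegral.integral_const_mul, intervalIntegral.integral_eq_sub_of_hasDerivAt
      (fun q hq => ξ.hasDerivAt_xi1_s8 (hsub (uIcc_of_le hq₀.2 ▸ hq)))
      (hcont.intervalIntegrable_of_Icc hq₀.2)]
  rw [ha_right q hq, mul_sub, mul_comm, ← div_eq_mul_inv (ξ.xi2 q), Real.div_sqrt]

lemma integral_inv_sub_eq (hq₀ : q₀ ∈ Icc 0 1) (ha_left : ∀ q ∈ Ioo 0 q₀, a q = 0)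
    (ha_right : ∀ q ∈ Ioo q₀ 1, a q = L - (√(ξ.xi2 q))⁻¹) :
    ∫ q in 0..1, (L - a q)⁻¹ = q₀ * L⁻¹ + ∫ q in q₀..1, √(ξ.xi2 q) := by
  have hcont : ContinuousOn ξ.xi2 (Icc q₀ 1) :=
    ξ.continuousOn_xi2.mono (Icc_subset_Icc (by linarith [hq₀.1]) le_rfl)
  rw [integral_eq_add_of_eqOn_Ioo hq₀.1 hq₀.2 intervalIntegrable_const
      (hcont.sqrt.intervalIntegrable_of_Icc hq₀.2) (G := fun _ => L⁻¹)
      (fun q hq => by simp [ha_left q hq]) fun q hq => ?_,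
    intervalIntegral.integral_const, sub_zero, smul_eq_mul]
  rw [ha_right q hq, sub_sub_cancel, inv_inv]

end MixtureFunction

theorem crisanti_sommers_equality_attained_general (ξ : MixtureFunction) (c : ℝ)
    (qbar : ℝ) (hqbar : qbar ∈ Ioo (0 : ℝ) 1)
    (hfix : c + ξ.xi1 qbar = qbar * ξ.xi2 qbar) :
    let L : ℝ := (Real.sqrt (ξ.xi2 qbar))⁻¹
    let α : ℝ → ℝ := fun s => if s < qbar then 0 else ξ.xi3 s / (2 * ξ.xi2 s ^ ((3 : ℝ) / 2))
    let a : ℝ → ℝ := fun q => ∫ r in (0 : ℝ)..q, α r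
    (∫ r in (0 : ℝ)..1, α r) < L ∧
      (c + ξ.xi1 1) * L - (∫ q in (0 : ℝ)..1, ξ.xi2 q * a q)
          + (∫ q in (0 : ℝ)..1, (L - a q)⁻¹)
        = 2 * qbar * Real.sqrt (ξ.xi2 qbar) + 2 * (∫ q in qbar..1, Real.sqrt (ξ.xi2 q)) := by
  intro L α a
  obtain ⟨hq0, hq1⟩ := hqbar
  have hpos : ∀ q ∈ Icc qbar 1, 0 < ξ.xi2 q := fun q hq => ξ.xi2_pos (hq0.trans_le hq.1) hq.2
  have ha_left : ∀ q ∈ Ioo 0 qbar, a q = 0 := fun q hq => integral_ite_lt_of_le _ hq.1.le hq.2.le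
  have ha_right : ∀ q ∈ Icc qbar 1, a q = L - (√(ξ.xi2 q))⁻¹ := fun q hq => by
    have hsub : Icc qbar q ⊆ Icc qbar 1 := Icc_subset_Icc le_rfl hq.2
    have hint := (ξ.continuousOn_xi3_div_rpow.mono
      (Icc_subset_Ioc hq0 hq.2)).intervalIntegrable_of_Icc (μ := volume) hq.1
    refine (integral_ite_lt hq0.le hq.1 hint).trans ?_
    exact integral_deriv_div_rpow_three_halves hq.1
      (fun x hx => ξ.hasDerivAt_xi2 ⟨by linarith [hx.1], hx.2.trans hq.2⟩)
      (fun x hx => hpos x (hsub hx)) hint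
  have ha_right' : ∀ q ∈ Ioo qbar 1, a q = L - (√(ξ.xi2 q))⁻¹ :=
    fun q hq => ha_right q (Ioo_subset_Icc_self hq)
  have hsqrt : 0 < √(ξ.xi2 qbar) := Real.sqrt_pos.2 (hpos qbar ⟨le_rfl, hq1.le⟩)
  refine ⟨?_, ?_⟩
  · change a 1 < L
    rw [ha_right 1 ⟨hq1.le, le_rfl⟩, sub_lt_self_iff, inv_pos, Real.sqrt_pos]
    exact ξ.xi2_pos one_pos le_rfl
  · rw [ξ.integral_xi2_mul_eq ⟨hq0.le, hq1.le⟩ ha_left ha_right',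
      ξ.integral_inv_sub_eq ⟨hq0.le, hq1.le⟩ ha_left ha_right', inv_inv]
    have hL : L * √(ξ.xi2 qbar) = 1 := inv_mul_cancel₀ hsqrt.ne'
    linear_combination (hfix - qbar * Real.mul_self_sqrt (hpos qbar ⟨le_rfl, hq1.le⟩).le) * L
      + qbar * √(ξ.xi2 qbar) * hL

/-- When `q ↦ ξ''(q)^{-1/2}` is concave on `[q̄,1]`, the explicit no-overlap-gap order
parameter `L = ξ''(q̄)^{-1/2}`, `α = 0` on `[0,q̄)` and `α(s) = ξ'''(s)/(2 ξ''(s)^{3/2})` on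
`[q̄,1]` is admissible (`L > ∫₀¹ α`) and attains equality in the Crisanti–Sommers
ground-state lower bound. -/
theorem crisanti_sommers_equality_attained (ξ : MixtureFunction) (c : ℝ) (hc : 0 < c)
    (hlt : c + ξ.xi1 1 < ξ.xi2 1)
    (qbar : ℝ) (hqbar : qbar ∈ Ioo (0 : ℝ) 1)
    (hfix : c + ξ.xi1 qbar = qbar * ξ.xi2 qbar)
    (hconc : ConcaveOn ℝ (Icc qbar 1) (fun q => (Real.sqrt (ξ.xi2 q))⁻¹)) :
    let L : ℝ := (Real.sqrt (ξ.xi2 qbar))⁻¹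
    let α : ℝ → ℝ := fun s => if s < qbar then 0 else ξ.xi3 s / (2 * ξ.xi2 s ^ ((3 : ℝ) / 2))
    let a : ℝ → ℝ := fun q => ∫ r in (0 : ℝ)..q, α r
    (∫ r in (0 : ℝ)..1, α r) < L ∧
      (c + ξ.xi1 1) * L - (∫ q in (0 : ℝ)..1, ξ.xi2 q * a q)
          + (∫ q in (0 : ℝ)..1, (L - a q)⁻¹)
        = 2 * qbar * Real.sqrt (ξ.xi2 qbar) + 2 * (∫ q in qbar..1, Real.sqrt (ξ.xi2 q)) :=
  crisanti_sommers_equality_attained_general ξ c qbar hqbar hfix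
end
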